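/- Let γ≥2 and |ν±⟩ as above. The operators M₍₀,?₎=|ν₋⟩⟨ν₋|⊗|0⟩⟨0|, M₍₁,?₎=|ν₋⟩⟨ν₋|⊗|1⟩⟨1|, M₍?,₊₎=|ν₊⟩⟨ν₊|⊗|+⟩⟨+|, M₍?,₋₎=|ν₊⟩⟨ν₊|⊗|−⟩⟨−|, and all other five elements zero, form a POVM on ℂ²⊗ℂ² and satisfy the error-free condition with post-measurement information for the states |φ₀⟩=|00⟩, |φ₁⟩=|01⟩, |φ₊⟩=|+⟩⊗|+⟩, |φ₋⟩=|+⟩⊗|−⟩: ⟨φ₁|M₍₀,?₎|φ₁⟩=⟨φ₀|M₍₁,?₎|φ₀⟩=0 and ⟨φ₋|M₍?,₊₎|φ₋⟩=⟨φ₊|M₍?,₋₎|φ₊⟩=0. -/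

import Mathlib

open Matrix Complex
open scoped Matrix Kronecker ComplexOrder

noncomputable section

abbrev Q2 := Fin 2 → ℂ
abbrev V4 := Fin 2 × Fin 2 → ℂ
abbrev Op2 := Matrix (Fin 2) (Fin 2) ℂ
abbrev Op4 := Matrix (Fin 2 × Fin 2) (Fin 2 × Fin 2) ℂ

def ket0 : Q2 := ![1, 0]
def ket1 : Q2 := ![0, 1]
def ketP : Q2 := (Real.sqrt 2 : ℂ)⁻¹ • (ket0 + ket1)
def ketM : Q2 := (Real.sqrt 2 : ℂ)⁻¹ • (ket0 - ket1)

/-- tensor product of two qubit vectors -/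
def tens (a b : Q2) : V4 := fun p => a p.1 * b p.2

/-- rank-one projector |v⟩⟨v| on one qubit -/
def proj2 (v : Q2) : Op2 := Matrix.of fun i j => v i * star (v j)

/-- rank-one operator |v⟩⟨v| on two qubits -/
def proj (v : V4) : Op4 := Matrix.of fun i j => v i * star (v j)

/-- inner product ⟨u|v⟩ -/
def ip4 (u v : V4) : ℂ := star u ⬝ᵥ v

/-- expectation value ⟨u|M|u⟩ -/
def expVal (u : V4) (M : Op4) : ℂ := star u ⬝ᵥ (M *ᵥ u)

-- Bell states
def PhiP : V4 := (Real.sqrt 2 : ℂ)⁻¹ • (tens ket0 ket0 + tens ket1 ket1)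
def PhiM : V4 := (Real.sqrt 2 : ℂ)⁻¹ • (tens ket0 ket0 - tens ket1 ket1)
def PsiP : V4 := (Real.sqrt 2 : ℂ)⁻¹ • (tens ket0 ket1 + tens ket1 ket0)
def PsiM : V4 := (Real.sqrt 2 : ℂ)⁻¹ • (tens ket0 ket1 - tens ket1 ket0)

-- Example 1 states
def φ0 : V4 := tens ket0 ket0
def φ1 : V4 := tens ket0 ket1
def φP : V4 := tens ketP ketP
def φM : V4 := tens ketM ketM

-- Example 1 reciprocal vectors
def φt0 : V4 := (Real.sqrt 2 : ℂ) • PhiM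
def φt1 : V4 := (Real.sqrt 2 : ℂ) • PsiM
def φtP : V4 := (Real.sqrt 2 : ℂ) • tens ket1 ketP
def φtM : V4 := -((Real.sqrt 2 : ℂ) • tens ket1 ketM)

-- Example 2 states
def ψ0 : V4 := tens ket0 ket0
def ψ1 : V4 := tens ket0 ket1
def ψP : V4 := tens ketP ketP
def ψM : V4 := tens ketP ketM

-- Example 2 reciprocal vectors
def ψt0 : V4 := (Real.sqrt 2 : ℂ) • tens ketM ket0
def ψt1 : V4 := (Real.sqrt 2 : ℂ) • tens ketM ket1
def ψtP : V4 := (Real.sqrt 2 : ℂ) • tens ket1 ketP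
def ψtM : V4 := (Real.sqrt 2 : ℂ) • tens ket1 ketM

/-- prior probabilities η₀=η₁=γ/(2(1+γ)), η₊=η₋=1/(2(1+γ)) -/
def η (γ : ℝ) : Fin 4 → ℝ :=
  ![γ / (2 * (1 + γ)), γ / (2 * (1 + γ)), 1 / (2 * (1 + γ)), 1 / (2 * (1 + γ))]

/-- |ν₊⟩ = √(1/2 − γ/(2√(1+γ²)))|0⟩ + √(1/2 + γ/(2√(1+γ²)))|1⟩ -/
def νp (γ : ℝ) : Q2 :=
  ![((Real.sqrt (1/2 - γ / (2 * Real.sqrt (1 + γ^2))) : ℝ) : ℂ),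
    ((Real.sqrt (1/2 + γ / (2 * Real.sqrt (1 + γ^2))) : ℝ) : ℂ)]

/-- |ν₋⟩ = √(1/2 + γ/(2√(1+γ²)))|0⟩ − √(1/2 − γ/(2√(1+γ²)))|1⟩ -/
def νm (γ : ℝ) : Q2 :=
  ![((Real.sqrt (1/2 + γ / (2 * Real.sqrt (1 + γ^2))) : ℝ) : ℂ),
    -((Real.sqrt (1/2 - γ / (2 * Real.sqrt (1 + γ^2))) : ℝ) : ℂ)]

/-!
Each of the pairs (|0⟩, |1⟩), (|−⟩, |+⟩) and (|ν₋⟩, |ν₊⟩) has the real rotation form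
((c, −s), (s, c)) with c² + s² = 1, so its two projectors sum to 𝟙; completeness of the POVM then
follows from bilinearity of the Kronecker product. For the error-free conditions,
⟨a⊗b| P_u ⊗ P_v |a⊗b⟩ = |⟨u|a⟩|² |⟨v|b⟩|², and in each case the second factor vanishes because
v ⊥ b.
-/

lemma proj2_eq_vecMulVec (v : Q2) : proj2 v = vecMulVec v (star v) := rfl

lemma posSemidef_proj2_kronecker_proj2 (u v : Q2) : (proj2 u ⊗ₖ proj2 v).PosSemidef := by
  rw [proj2_eq_vecMulVec, proj2_eq_vecMulVec]
  exact (posSemidef_vecMulVec_self_star u).kronecker (posSemidef_vecMulVec_self_star v)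

lemma proj2_add_proj2_eq_one_of_sq_add_sq {c s : ℝ} (h : c ^ 2 + s ^ 2 = 1) :
    proj2 ![(c : ℂ), -(s : ℂ)] + proj2 ![(s : ℂ), (c : ℂ)] = 1 := by
  have h' : (c : ℂ) ^ 2 + (s : ℂ) ^ 2 = 1 := by exact_mod_cast h
  ext i j
  fin_cases i <;> fin_cases j <;> simp [proj2, one_apply] <;>
    first | ring1 | linear_combination h'

lemma expVal_tens_kronecker_proj2 (a b u v : Q2) :
    expVal (tens a b) (proj2 u ⊗ₖ proj2 v)
      = (star a ⬝ᵥ u) * (star u ⬝ᵥ a) * ((star b ⬝ᵥ v) * (star v ⬝ᵥ b)) := by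
  simp only [expVal, dotProduct, Pi.star_apply, tens, star_mul', mulVec, proj2, kroneckerMap_apply,
    of_apply, Fintype.sum_prod_type, Fin.sum_univ_two]
  ring

lemma expVal_tens_kronecker_proj2_of_orthogonal (a u : Q2) {b v : Q2} (h : star v ⬝ᵥ b = 0) :
    expVal (tens a b) (proj2 u ⊗ₖ proj2 v) = 0 := by
  rw [expVal_tens_kronecker_proj2, h, mul_zero, mul_zero]

lemma ket0_eq : ket0 = ![((1 : ℝ) : ℂ), -((0 : ℝ) : ℂ)] := by simp [ket0]

lemma ket1_eq : ket1 = ![((0 : ℝ) : ℂ), ((1 : ℝ) : ℂ)] := by simp [ket1]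

lemma ketM_eq : ketM = ![(((√2)⁻¹ : ℝ) : ℂ), -(((√2)⁻¹ : ℝ) : ℂ)] := by
  ext i; fin_cases i <;> simp [ketM, ket0, ket1]

lemma ketP_eq : ketP = ![(((√2)⁻¹ : ℝ) : ℂ), (((√2)⁻¹ : ℝ) : ℂ)] := by
  ext i; fin_cases i <;> simp [ketP, ket0, ket1]

lemma proj2_ket0_add_proj2_ket1 : proj2 ket0 + proj2 ket1 = 1 := by
  rw [ket0_eq, ket1_eq]
  exact proj2_add_proj2_eq_one_of_sq_add_sq (by norm_num)

lemma proj2_ketP_add_proj2_ketM : proj2 ketP + proj2 ketM = 1 := by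
  rw [add_comm, ketM_eq, ketP_eq]
  exact proj2_add_proj2_eq_one_of_sq_add_sq (by rw [inv_pow, Real.sq_sqrt zero_le_two]; norm_num)

lemma abs_div_two_sqrt_one_add_sq_le_half (γ : ℝ) : |γ / (2 * √(1 + γ ^ 2))| ≤ 1 / 2 := by
  have hγ : |γ| ≤ √(1 + γ ^ 2) := Real.abs_le_sqrt (by linarith)
  have hpos : 0 < 2 * √(1 + γ ^ 2) := by positivity
  rw [abs_div, abs_of_pos hpos, div_le_iff₀ hpos]
  linarith

lemma proj2_νm_add_proj2_νp (γ : ℝ) : proj2 (νm γ) + proj2 (νp γ) = 1 := by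
  obtain ⟨hlo, hhi⟩ := abs_le.mp (abs_div_two_sqrt_one_add_sq_le_half γ)
  refine proj2_add_proj2_eq_one_of_sq_add_sq ?_
  rw [Real.sq_sqrt (by linarith), Real.sq_sqrt (by linarith)]
  ring

lemma star_ket0_dotProduct_ket1 : star ket0 ⬝ᵥ ket1 = 0 := by
  simp [ket0, ket1, dotProduct, Fin.sum_univ_two]

lemma star_ket1_dotProduct_ket0 : star ket1 ⬝ᵥ ket0 = 0 := by
  simp [ket0, ket1, dotProduct, Fin.sum_univ_two]

lemma star_ketP_dotProduct_ketM : star ketP ⬝ᵥ ketM = 0 := by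
  simp [ketP_eq, ketM_eq, dotProduct, Fin.sum_univ_two]

lemma star_ketM_dotProduct_ketP : star ketM ⬝ᵥ ketP = 0 := by
  simp [ketP_eq, ketM_eq, dotProduct, Fin.sum_univ_two]

theorem stmt_13_general (γ : ℝ) :
    (proj2 (νm γ) ⊗ₖ proj2 ket0).PosSemidef ∧
    (proj2 (νm γ) ⊗ₖ proj2 ket1).PosSemidef ∧
    (proj2 (νp γ) ⊗ₖ proj2 ketP).PosSemidef ∧
    (proj2 (νp γ) ⊗ₖ proj2 ketM).PosSemidef ∧
    proj2 (νm γ) ⊗ₖ proj2 ket0 + proj2 (νm γ) ⊗ₖ proj2 ket1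
      + proj2 (νp γ) ⊗ₖ proj2 ketP + proj2 (νp γ) ⊗ₖ proj2 ketM
      + 0 + 0 + 0 + 0 + 0 = 1 ∧
    expVal ψ1 (proj2 (νm γ) ⊗ₖ proj2 ket0) = 0 ∧
    expVal ψ0 (proj2 (νm γ) ⊗ₖ proj2 ket1) = 0 ∧
    expVal ψM (proj2 (νp γ) ⊗ₖ proj2 ketP) = 0 ∧
    expVal ψP (proj2 (νp γ) ⊗ₖ proj2 ketM) = 0 := by
  refine ⟨posSemidef_proj2_kronecker_proj2 _ _, posSemidef_proj2_kronecker_proj2 _ _,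
    posSemidef_proj2_kronecker_proj2 _ _, posSemidef_proj2_kronecker_proj2 _ _, ?_,
    expVal_tens_kronecker_proj2_of_orthogonal _ _ star_ket0_dotProduct_ket1,
    expVal_tens_kronecker_proj2_of_orthogonal _ _ star_ket1_dotProduct_ket0,
    expVal_tens_kronecker_proj2_of_orthogonal _ _ star_ketP_dotProduct_ketM,
    expVal_tens_kronecker_proj2_of_orthogonal _ _ star_ketM_dotProduct_ketP⟩
  simp only [add_zero]
  rw [← kronecker_add, add_assoc, ← kronecker_add, proj2_ket0_add_proj2_ket1,
    proj2_ketP_add_proj2_ketM, ← add_kronecker, proj2_νm_add_proj2_νp, one_kronecker_one]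

/-- the four nonzero elements M₍₀,?₎, M₍₁,?₎, M₍?,₊₎, M₍?,₋₎ (all other
five elements zero) form a POVM satisfying the error-free condition with
post-measurement information for Example 2. -/
theorem stmt_13 (γ : ℝ) (hγ : 2 ≤ γ) :
    (proj2 (νm γ) ⊗ₖ proj2 ket0).PosSemidef ∧
    (proj2 (νm γ) ⊗ₖ proj2 ket1).PosSemidef ∧
    (proj2 (νp γ) ⊗ₖ proj2 ketP).PosSemidef ∧
    (proj2 (νp γ) ⊗ₖ proj2 ketM).PosSemidef ∧
    proj2 (νm γ) ⊗ₖ proj2 ket0 + proj2 (νm γ) ⊗ₖ proj2 ket1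
      + proj2 (νp γ) ⊗ₖ proj2 ketP + proj2 (νp γ) ⊗ₖ proj2 ketM
      + 0 + 0 + 0 + 0 + 0 = 1 ∧
    expVal ψ1 (proj2 (νm γ) ⊗ₖ proj2 ket0) = 0 ∧
    expVal ψ0 (proj2 (νm γ) ⊗ₖ proj2 ket1) = 0 ∧
    expVal ψM (proj2 (νp γ) ⊗ₖ proj2 ketP) = 0 ∧
    expVal ψP (proj2 (νp γ) ⊗ₖ proj2 ketM) = 0 :=
  stmt_13_general γ
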